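/- Let p ∈ (1,2) and a > 0, and let ψ : [0,1) → [0,∞) be continuously differentiable with ψ(0) = 0 satisfying ψ'(y) + (p/(p-1)) ψ(y)^{(p-1)/p} = (p a^{2-p}/(p-1))(1-y) for all y ∈ (0,1). If A ∈ (0,1) satisfies A^{(p-1)/p} - A ≥ a^{2-p}, then ψ(y) ≤ A(1-y)^{p/(p-1)} for all y ∈ [0,1). Consequently, since max_{A ∈ (0,1)}(A^{(p-1)/p} - A) = (p-1)^{p-1}/p^p, for every a ∈ (0, (p-1)^{(p-1)/(2-p)} p^{-p/(2-p)}] one has ψ(y)(1-y)^{-p} → 0 as y → 1. -/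

import Mathlib

open Set Filter Topology

/-!
The function `B(y) = A (1-y)^{p/(p-1)}` is a strict supersolution: at a point where `ψ` touches
`B`, the equation gives `ψ' ≤ -(p/(p-1)) A (1-y)`, and this is strictly below
`B' = -(p/(p-1)) A (1-y)^{1/(p-1)}` because `1/(p-1) > 1`. As `ψ(0) = 0 < A = B(0)`, the graph of
`ψ` can never cross that of `B`. For the decay, take the optimal `A = ((p-1)/p)^p` and use
`p/(p-1) > p`.
-/

/-- `ψ : [0,1) → [0,∞)` is continuously differentiable (with derivative `ψd`), `ψ(0) = 0`,
and `ψ' + (p/(p-1)) ψ^{(p-1)/p} = (p a^{2-p}/(p-1))(1-y)` holds on `(0,1)`. -/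
def PsiSol (p a : ℝ) (ψ ψd : ℝ → ℝ) : Prop :=
  (∀ y ∈ Set.Ico (0:ℝ) 1, HasDerivWithinAt ψ (ψd y) (Set.Ico 0 1) y) ∧
  ContinuousOn ψd (Set.Ico 0 1) ∧
  (∀ y ∈ Set.Ico (0:ℝ) 1, 0 ≤ ψ y) ∧
  ψ 0 = 0 ∧
  (∀ y ∈ Set.Ioo (0:ℝ) 1,
    ψd y + (p/(p-1)) * ψ y ^ ((p-1)/p) = (p * a ^ (2-p) / (p-1)) * (1-y))

lemma mul_rpow_rpow_inv {A t q : ℝ} (hA : 0 ≤ A) (ht : 0 ≤ t) (hq : q ≠ 0) :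
    (A * t ^ q) ^ q⁻¹ = A ^ q⁻¹ * t := by
  rw [Real.mul_rpow hA (Real.rpow_nonneg ht q), Real.rpow_rpow_inv ht hq]

lemma hasDerivAt_mul_one_sub_rpow (A : ℝ) {q : ℝ} (hq : 1 ≤ q) (x : ℝ) :
    HasDerivAt (fun x => A * (1 - x) ^ q) (-(A * q) * (1 - x) ^ (q - 1)) x := by
  have h := (((hasDerivAt_id x).const_sub 1).rpow_const (Or.inr hq)).const_mul A
  exact h.congr_deriv (by simp only [id]; ring)

lemma tendsto_mul_one_sub_rpow_neg_of_le {f : ℝ → ℝ} {A p q : ℝ} (hpq : p < q)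
    (hf₀ : ∀ᶠ y in 𝓝[<] 1, 0 ≤ f y) (hf : ∀ᶠ y in 𝓝[<] 1, f y ≤ A * (1 - y) ^ q) :
    Tendsto (fun y => f y * (1 - y) ^ (-p)) (𝓝[<] 1) (𝓝 0) := by
  have hq : 0 < q - p := sub_pos.2 hpq
  have hlt : ∀ᶠ y in 𝓝[<] (1:ℝ), 0 < 1 - y :=
    eventually_nhdsWithin_of_forall fun y (hy : y < 1) => sub_pos.2 hy
  refine squeeze_zero' ?_ ?_ (g := fun y => A * (1 - y) ^ (q - p)) ?_
  · filter_upwards [hf₀, hlt] with y hy h1y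
    exact mul_nonneg hy (Real.rpow_nonneg h1y.le _)
  · filter_upwards [hf, hlt] with y hy h1y
    calc f y * (1 - y) ^ (-p) ≤ A * (1 - y) ^ q * (1 - y) ^ (-p) :=
          mul_le_mul_of_nonneg_right hy (Real.rpow_nonneg h1y.le _)
      _ = A * (1 - y) ^ (q - p) := by
          rw [mul_assoc, ← Real.rpow_add h1y, ← sub_eq_add_neg]
  · have h1 : Tendsto (fun y : ℝ => 1 - y) (𝓝[<] 1) (𝓝 0) :=
      tendsto_nhdsWithin_of_tendsto_nhds ((continuous_sub_left 1).tendsto' 1 0 (sub_self 1))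
    have h2 : ContinuousAt (fun t : ℝ => A * t ^ (q - p)) 0 :=
      continuousAt_const.mul (Real.continuousAt_rpow_const 0 _ (Or.inr hq.le))
    simpa [Function.comp_def, Real.zero_rpow hq.ne'] using h2.tendsto.comp h1

lemma div_rpow_self_rpow_sub_self {p : ℝ} (hp : 1 < p) :
    (((p - 1) / p) ^ p) ^ ((p - 1) / p) - ((p - 1) / p) ^ p = (p - 1) ^ (p - 1) / p ^ p := by
  have hp0 : 0 < p := by linarith
  have hp1 : 0 < p - 1 := by linarith
  have hpow : ∀ {b : ℝ}, 0 < b → b ^ p = b ^ (p - 1) * b := fun hb => by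
    rw [← Real.rpow_add_one hb.ne', sub_add_cancel]
  rw [← Real.rpow_mul (div_pos hp1 hp0).le, mul_div_cancel₀ _ hp0.ne',
    Real.div_rpow hp1.le hp0.le, Real.div_rpow hp1.le hp0.le, hpow hp1, hpow hp0]
  have : 0 < p ^ (p - 1) := Real.rpow_pos_of_pos hp0 _
  field_simp
  ring

lemma rpow_two_sub_le_of_le {p a : ℝ} (hp : p ∈ Ioo (1:ℝ) 2) (ha : 0 ≤ a)
    (h : a ≤ (p - 1) ^ ((p - 1) / (2 - p)) * p ^ (-(p / (2 - p)))) :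
    a ^ (2 - p) ≤ (p - 1) ^ (p - 1) / p ^ p := by
  have hp0 : 0 ≤ p := by linarith [hp.1]
  have hp1 : 0 ≤ p - 1 := by linarith [hp.1]
  have h2p : 2 - p ≠ 0 := by linarith [hp.2]
  calc a ^ (2 - p) ≤ ((p - 1) ^ ((p - 1) / (2 - p)) * p ^ (-(p / (2 - p)))) ^ (2 - p) :=
        Real.rpow_le_rpow ha h (by linarith [hp.2])
    _ = (p - 1) ^ (p - 1) / p ^ p := by
        rw [Real.mul_rpow (Real.rpow_nonneg hp1 _) (Real.rpow_nonneg hp0 _),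
          ← Real.rpow_mul hp1, ← Real.rpow_mul hp0, div_mul_cancel₀ _ h2p, neg_mul,
          div_mul_cancel₀ _ h2p, Real.rpow_neg hp0, div_eq_mul_inv]

namespace PsiSol

variable {p a : ℝ} {ψ ψd : ℝ → ℝ}

lemma deriv_lt_of_eq_barrier (hψ : PsiSol p a ψ ψd) (hp : p ∈ Ioo (1:ℝ) 2) {A : ℝ}
    (hA : 0 < A) (hAa : a ^ (2 - p) ≤ A ^ ((p - 1) / p) - A) {x : ℝ} (hx : x ∈ Ioo (0:ℝ) 1)
    (hψx : ψ x = A * (1 - x) ^ (p / (p - 1))) :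
    ψd x < -(A * (p / (p - 1))) * (1 - x) ^ (p / (p - 1) - 1) := by
  obtain ⟨hp1, hp2⟩ := hp
  have hp1' : 0 < p - 1 := by linarith
  have hc : 0 < p / (p - 1) := div_pos (by linarith) hp1'
  have h1x : 0 < 1 - x := by linarith [hx.2]
  have hroot : ψ x ^ ((p - 1) / p) = A ^ ((p - 1) / p) * (1 - x) := by
    rw [hψx, ← inv_div p, mul_rpow_rpow_inv hA.le h1x.le hc.ne']
  have hode := hψ.2.2.2.2 x hx
  rw [hroot] at hode
  have hexp : 1 < p / (p - 1) - 1 := by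
    rw [lt_sub_iff_add_lt, lt_div_iff₀ hp1']; linarith
  have hsmall : (1 - x) ^ (p / (p - 1) - 1) < 1 - x := by
    simpa using Real.rpow_lt_rpow_of_exponent_gt h1x (by linarith [hx.1]) hexp
  calc ψd x = p / (p - 1) * (a ^ (2 - p) - A ^ ((p - 1) / p)) * (1 - x) := by
        linear_combination hode
    _ ≤ -(A * (p / (p - 1))) * (1 - x) := by
        have : a ^ (2 - p) - A ^ ((p - 1) / p) ≤ -A := by linarith
        nlinarith [mul_le_mul_of_nonneg_right this (mul_pos hc h1x).le]
    _ < -(A * (p / (p - 1))) * (1 - x) ^ (p / (p - 1) - 1) := by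
        nlinarith [mul_lt_mul_of_pos_left hsmall (mul_pos hA hc)]

lemma le_barrier (hψ : PsiSol p a ψ ψd) (hp : p ∈ Ioo (1:ℝ) 2) {A : ℝ} (hA : A ∈ Ioo (0:ℝ) 1)
    (hAa : a ^ (2 - p) ≤ A ^ ((p - 1) / p) - A) {y : ℝ} (hy : y ∈ Ico (0:ℝ) 1) :
    ψ y ≤ A * (1 - y) ^ (p / (p - 1)) := by
  obtain ⟨hderiv, -, -, hψ0, -⟩ := id hψ
  have hq : 1 ≤ p / (p - 1) := by
    rw [le_div_iff₀ (by linarith [hp.1])]; linarith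
  have hsub : Icc 0 y ⊆ Ico (0:ℝ) 1 := Icc_subset_Ico_right hy.2
  refine image_le_of_deriv_right_lt_deriv_boundary (f' := ψd) (a := 0) (b := y)
    (fun x hx => (hderiv x (hsub hx)).continuousWithinAt.mono hsub) (fun x hx => ?_)
    (by simp [hψ0, hA.1.le]) (hasDerivAt_mul_one_sub_rpow A hq) (fun x hx hψx => ?_)
    ⟨hy.1, le_rfl⟩
  · have hx1 : x < 1 := hx.2.trans hy.2
    refine (hderiv x ⟨hx.1, hx1⟩).mono_of_mem_nhdsWithin ?_
    exact mem_nhdsWithin.2 ⟨Iio 1, isOpen_Iio, hx1, fun z hz => ⟨hx.1.trans hz.2, hz.1⟩⟩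
  · rcases hx.1.eq_or_lt with rfl | hx0
    · simp [hψ0, hA.1.ne] at hψx
    · exact hψ.deriv_lt_of_eq_barrier hp hA.1 hAa ⟨hx0, hx.2.trans hy.2⟩ hψx

end PsiSol

/-- If `A ∈ (0,1)` satisfies `A^{(p-1)/p} - A ≥ a^{2-p}`, then
`ψ(y) ≤ A(1-y)^{p/(p-1)}` on `[0,1)`; consequently, for every
`a ∈ (0, (p-1)^{(p-1)/(2-p)} p^{-p/(2-p)}]` one has `ψ(y)(1-y)^{-p} → 0` as `y → 1`. -/
theorem stmt13 (p a : ℝ) (hp : p ∈ Set.Ioo (1:ℝ) 2) (ha : 0 < a)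
    (ψ ψd : ℝ → ℝ) (hψ : PsiSol p a ψ ψd) :
    (∀ A ∈ Set.Ioo (0:ℝ) 1, a ^ (2-p) ≤ A ^ ((p-1)/p) - A →
      ∀ y ∈ Set.Ico (0:ℝ) 1, ψ y ≤ A * (1-y) ^ (p/(p-1))) ∧
    (a ≤ (p-1) ^ ((p-1)/(2-p)) * p ^ (-(p/(2-p))) →
      Tendsto (fun y => ψ y * (1-y) ^ (-p)) (𝓝[<] (1:ℝ)) (𝓝 0)) := by
  refine ⟨fun A hA hAa y hy => hψ.le_barrier hp hA hAa hy, fun haM => ?_⟩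
  obtain ⟨hp1, hp2⟩ := id hp
  set A : ℝ := ((p - 1) / p) ^ p
  have hb : (p - 1) / p ∈ Ioo (0:ℝ) 1 :=
    ⟨div_pos (by linarith) (by linarith), (div_lt_one (by linarith)).2 (by linarith)⟩
  have hA : A ∈ Ioo (0:ℝ) 1 :=
    ⟨Real.rpow_pos_of_pos hb.1 p, Real.rpow_lt_one hb.1.le hb.2 (by linarith)⟩
  have hAa : a ^ (2 - p) ≤ A ^ ((p - 1) / p) - A := by
    rw [div_rpow_self_rpow_sub_self hp1]
    exact rpow_two_sub_le_of_le hp ha.le haM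
  have hpq : p < p / (p - 1) := by
    rw [lt_div_iff₀ (by linarith)]; nlinarith
  have hIoo : ∀ᶠ y in 𝓝[<] (1:ℝ), y ∈ Ioo (0:ℝ) 1 :=
    Ioo_mem_nhdsLT_of_mem ⟨one_pos, le_rfl⟩
  refine tendsto_mul_one_sub_rpow_neg_of_le (A := A) hpq ?_ ?_
  · filter_upwards [hIoo] with y hy using hψ.2.2.1 y (Ioo_subset_Ico_self hy)
  · filter_upwards [hIoo] with y hy using hψ.le_barrier hp hA hAa (Ioo_subset_Ico_self hy)
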